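/- Fix integers n1, n2 ≥ 3 and θ ∈ ℝ^5. Then λ_min(Q̃_{2n1,2n2}(θ)) ≤ λ_min(Q_{n1,n2}(θ)); that is, the smallest eigenvalue of the block-circulant approximation on the doubled lattice of size 2n1 × 2n2 is a lower bound for the smallest eigenvalue of the precision matrix on the lattice of size n1 × n2. -/

import Mathlib

open Matrix

/-- Smallest element of the real spectrum of a real (symmetric) matrix. -/
noncomputable def lamMin {m : Type} [Fintype m] [DecidableEq m] (M : Matrix m m ℝ) : ℝ :=
  sInf (spectrum ℝ M)

/-- Block-Toeplitz block `T_{n1,n2}(x,y,z)`, indexed by pairs `(a,b)` with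
`a ∈ Fin n2`, `b ∈ Fin n1`. -/
def Tmat (n1 n2 : ℕ) (x y z : ℝ) :
    Matrix (Fin n2 × Fin n1) (Fin n2 × Fin n1) ℝ := fun p q =>
  if q = p then y
  else if (q.1 = p.1 ∧ (q.2 : ℕ) = (p.2 : ℕ) + 1) ∨ (q.2 = p.2 ∧ (q.1 : ℕ) = (p.1 : ℕ) + 1) then z
  else if (q.1 = p.1 ∧ (q.2 : ℕ) + 1 = (p.2 : ℕ)) ∨ (q.2 = p.2 ∧ (q.1 : ℕ) + 1 = (p.1 : ℕ)) then x
  else 0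

/-- Block-circulant block `C_{n1,n2}(x,y,z)`. -/
def Cmat (n1 n2 : ℕ) (x y z : ℝ) :
    Matrix (Fin n2 × Fin n1) (Fin n2 × Fin n1) ℝ := fun p q =>
  if q = p then y
  else if (q.1 = p.1 ∧ (q.2 : ℕ) = ((p.2 : ℕ) + 1) % n1) ∨
          (q.2 = p.2 ∧ (q.1 : ℕ) = ((p.1 : ℕ) + 1) % n2) then z
  else if (q.1 = p.1 ∧ ((q.2 : ℕ) + 1) % n1 = (p.2 : ℕ)) ∨
          (q.2 = p.2 ∧ ((q.1 : ℕ) + 1) % n2 = (p.1 : ℕ)) then x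
  else 0

/-- The precision matrix `Q_{n1,n2}(θ)`, `θ = (φ, ρ11, ρ12, ρ21, ρ22)`. -/
def Qmat (n1 n2 : ℕ) (φ ρ11 ρ12 ρ21 ρ22 : ℝ) :
    Matrix ((Fin n2 × Fin n1) ⊕ (Fin n2 × Fin n1)) ((Fin n2 × Fin n1) ⊕ (Fin n2 × Fin n1)) ℝ :=
  Matrix.fromBlocks (Tmat n1 n2 ρ11 1 ρ11) (Tmat n1 n2 ρ21 φ ρ12)
    (Tmat n1 n2 ρ21 φ ρ12)ᵀ (Tmat n1 n2 ρ22 1 ρ22)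

/-- The block-circulant (toroidal) approximation `Q̃_{n1,n2}(θ)`. -/
def Qcmat (n1 n2 : ℕ) (φ ρ11 ρ12 ρ21 ρ22 : ℝ) :
    Matrix ((Fin n2 × Fin n1) ⊕ (Fin n2 × Fin n1)) ((Fin n2 × Fin n1) ⊕ (Fin n2 × Fin n1)) ℝ :=
  Matrix.fromBlocks (Cmat n1 n2 ρ11 1 ρ11) (Cmat n1 n2 ρ21 φ ρ12)
    (Cmat n1 n2 ρ21 φ ρ12)ᵀ (Cmat n1 n2 ρ22 1 ρ22)

/-!
Away from the wrap-around edges the torus and the open lattice have the same neighbours, so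
`Q_{n1,n2}(θ)` is the principal submatrix of `Q̃_{2n1,2n2}(θ)` on the corner `n1 × n2`. If
`M - c • 1` is positive semidefinite, so is every principal submatrix of it; hence the smallest
eigenvalue of a symmetric matrix never exceeds that of a principal submatrix.
-/

section lamMin

variable {m n : Type} [Fintype m] [DecidableEq m] [Fintype n] [DecidableEq n]

open scoped MatrixOrder in
/-- By the continuous functional calculus, `c • 1 ≤ M` exactly when `c` bounds the spectrum
of `M` from below. -/
theorem Matrix.IsHermitian.le_lamMin_iff [Nonempty m] {M : Matrix m m ℝ} (hM : M.IsHermitian)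
    {c : ℝ} : c ≤ lamMin M ↔ (M - c • 1).PosSemidef := by
  have hspec := hM.spectrum_real_eq_range_eigenvalues
  have hbdd : BddBelow (spectrum ℝ M) := hspec ▸ (Set.finite_range _).bddBelow
  rw [lamMin, le_csInf_iff hbdd (hspec ▸ Set.range_nonempty _), ← le_iff,
    ← Algebra.algebraMap_eq_smul_one, algebraMap_le_iff_le_spectrum (ha := hM)]

theorem Matrix.IsHermitian.lamMin_le_lamMin_submatrix [Nonempty m] {B : Matrix n n ℝ}
    (hB : B.IsHermitian) {f : m → n} (hf : Function.Injective f) :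
    lamMin B ≤ lamMin (B.submatrix f f) := by
  have : Nonempty n := .map f ‹_›
  have hshift := (hB.le_lamMin_iff (c := lamMin B)).mp le_rfl
  rw [(hB.submatrix f).le_lamMin_iff]
  simpa [submatrix_sub, submatrix_smul, submatrix_one _ hf] using hshift.submatrix f

end lamMin

theorem Cmat_transpose (n1 n2 : ℕ) (x y : ℝ) : (Cmat n1 n2 x y x)ᵀ = Cmat n1 n2 x y x := by
  ext p q
  simp only [transpose_apply, Cmat]
  split_ifs <;> grind

def doublingEmbedding (n1 n2 : ℕ) : Fin n2 × Fin n1 → Fin (2 * n2) × Fin (2 * n1) :=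
  Prod.map (Fin.castLE (by omega)) (Fin.castLE (by omega))

theorem doublingEmbedding_injective (n1 n2 : ℕ) : Function.Injective (doublingEmbedding n1 n2) :=
  (Fin.castLE_injective _).prodMap (Fin.castLE_injective _)

/-- On the corner no index wraps around, since `i + 1 < 2 n` for `i < n`. -/
theorem Tmat_eq_submatrix_Cmat (n1 n2 : ℕ) (x y z : ℝ) :
    Tmat n1 n2 x y z =
      (Cmat (2 * n1) (2 * n2) x y z).submatrix (doublingEmbedding n1 n2)
        (doublingEmbedding n1 n2) := by
  ext p q
  have m1 : ((p.2 : ℕ) + 1) % (2 * n1) = p.2 + 1 := Nat.mod_eq_of_lt (by omega)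
  have m2 : ((p.1 : ℕ) + 1) % (2 * n2) = p.1 + 1 := Nat.mod_eq_of_lt (by omega)
  have m3 : ((q.2 : ℕ) + 1) % (2 * n1) = q.2 + 1 := Nat.mod_eq_of_lt (by omega)
  have m4 : ((q.1 : ℕ) + 1) % (2 * n2) = q.1 + 1 := Nat.mod_eq_of_lt (by omega)
  simp only [submatrix_apply, Tmat, Cmat, doublingEmbedding, Prod.map, Prod.ext_iff, Fin.ext_iff,
    Fin.val_castLE, m1, m2, m3, m4]

theorem Qcmat_isHermitian (n1 n2 : ℕ) (φ ρ11 ρ12 ρ21 ρ22 : ℝ) :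
    (Qcmat n1 n2 φ ρ11 ρ12 ρ21 ρ22).IsHermitian := by
  rw [IsHermitian, conjTranspose_eq_transpose_of_trivial, Qcmat, fromBlocks_transpose,
    transpose_transpose, Cmat_transpose, Cmat_transpose]

theorem Qmat_eq_submatrix_Qcmat (n1 n2 : ℕ) (φ ρ11 ρ12 ρ21 ρ22 : ℝ) :
    Qmat n1 n2 φ ρ11 ρ12 ρ21 ρ22 =
      (Qcmat (2 * n1) (2 * n2) φ ρ11 ρ12 ρ21 ρ22).submatrix
        (Sum.map (doublingEmbedding n1 n2) (doublingEmbedding n1 n2))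
        (Sum.map (doublingEmbedding n1 n2) (doublingEmbedding n1 n2)) := by
  ext (i | i) (j | j) <;> simp [Qmat, Qcmat, Tmat_eq_submatrix_Cmat]

/-- The smallest eigenvalue of the block-circulant approximation on the doubled
lattice `2n1 × 2n2` is a lower bound for the smallest eigenvalue of the
precision matrix on the lattice `n1 × n2`. -/
theorem doubled_circulant_lower_bound (n1 n2 : ℕ) (h1 : 3 ≤ n1) (h2 : 3 ≤ n2)
    (φ ρ11 ρ12 ρ21 ρ22 : ℝ) :
    lamMin (Qcmat (2 * n1) (2 * n2) φ ρ11 ρ12 ρ21 ρ22) ≤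
      lamMin (Qmat n1 n2 φ ρ11 ρ12 ρ21 ρ22) := by
  have : Nonempty (Fin n2 × Fin n1) := ⟨(⟨0, by omega⟩, ⟨0, by omega⟩)⟩
  rw [Qmat_eq_submatrix_Qcmat]
  exact (Qcmat_isHermitian _ _ φ ρ11 ρ12 ρ21 ρ22).lamMin_le_lamMin_submatrix
    ((doublingEmbedding_injective n1 n2).sumMap (doublingEmbedding_injective n1 n2))
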